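/- Let A be an n×n matrix with nonnegative entries, X = (min{a_{ij}, a_{ji}}), and b₁₁, b₂₂ the two smallest diagonal entries of A. Then ρ(A) ≥ (b₁₁ + b₂₂)/2 + ( tr(X²)/n − (tr(X)/n)² )^{1/2}. -/

import Mathlib

open Matrix BigOperators Finset
open scoped ENNReal NNReal

/-- The spectral radius of a real square matrix: the supremum of the moduli
of its complex eigenvalues. -/
noncomputable def specRad {n : ℕ} (A : Matrix (Fin n) (Fin n) ℝ) : ℝ :=
  sSup ((fun μ : ℂ => ‖μ‖) '' spectrum ℂ (A.map Complex.ofReal))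

open Matrix BigOperators Finset

private lemma dot_mulVec_flip {n : ℕ} (M : Matrix (Fin n) (Fin n) ℝ) (x z : Fin n → ℝ) :
    x ⬝ᵥ (M *ᵥ z) = (star M *ᵥ x) ⬝ᵥ z := by
  simp only [dotProduct, mulVec, dotProduct, Matrix.star_apply, star_trivial,
    Finset.mul_sum, Finset.sum_mul]
  rw [Finset.sum_comm]
  exact Finset.sum_congr rfl fun j _ => Finset.sum_congr rfl fun i _ => by ring

private lemma quad_decomp {n : ℕ} {X : Matrix (Fin n) (Fin n) ℝ} (hX : X.IsHermitian)
    (x : Fin n → ℝ) :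
    ∃ y : Fin n → ℝ, x ⬝ᵥ (X *ᵥ x) = ∑ i, hX.eigenvalues i * y i ^ 2 ∧
      x ⬝ᵥ x = ∑ i, y i ^ 2 := by
  classical
  set U : Matrix (Fin n) (Fin n) ℝ := (hX.eigenvectorUnitary : Matrix (Fin n) (Fin n) ℝ) with hU
  have hU1 : U * star U = 1 := Matrix.mem_unitaryGroup_iff.mp hX.eigenvectorUnitary.2
  set y : Fin n → ℝ := (star U) *ᵥ x with hy
  refine ⟨y, ?_, ?_⟩
  · conv_lhs => rw [hX.spectral_theorem, Unitary.conjStarAlgAut_apply]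
    rw [← Matrix.mulVec_mulVec, ← Matrix.mulVec_mulVec, dot_mulVec_flip]
    simp only [← hy, RCLike.ofReal_real_eq_id]
    simp only [dotProduct, Matrix.mulVec_diagonal]
    exact Finset.sum_congr rfl fun i _ => by simp; ring
  · have : x ⬝ᵥ x = x ⬝ᵥ ((U * star U) *ᵥ x) := by rw [hU1, Matrix.one_mulVec]
    rw [this, ← Matrix.mulVec_mulVec, dot_mulVec_flip, ← hy]
    simp only [dotProduct]
    exact Finset.sum_congr rfl fun i _ => by ring

private lemma trace_pow {n : ℕ} {X : Matrix (Fin n) (Fin n) ℝ} (hX : X.IsHermitian)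
    (m : ℕ) : (X ^ m).trace = ∑ i, hX.eigenvalues i ^ m := by
  classical
  set U : Matrix (Fin n) (Fin n) ℝ := (hX.eigenvectorUnitary : Matrix (Fin n) (Fin n) ℝ) with hU
  have hU1 : U * star U = 1 := Matrix.mem_unitaryGroup_iff.mp hX.eigenvectorUnitary.2
  have hU2 : star U * U = 1 := Matrix.mem_unitaryGroup_iff'.mp hX.eigenvectorUnitary.2
  set D : Matrix (Fin n) (Fin n) ℝ := Matrix.diagonal (RCLike.ofReal ∘ hX.eigenvalues) with hD
  have key : ∀ k : ℕ, X ^ k = U * D ^ k * star U := by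
    intro k
    induction k with
    | zero => simp [pow_zero, hU1]
    | succ k ih =>
      have hX1 : X = U * D * star U := hX.spectral_theorem
      rw [pow_succ, ih]
      conv_lhs => rw [hX1]
      have e1 : U * D ^ k * star U * (U * D * star U)
          = U * D ^ k * (star U * U) * D * star U := by
        simp only [mul_assoc]
      rw [e1, hU2, mul_one, pow_succ]
      simp only [mul_assoc]
  rw [key m, Matrix.trace_mul_cycle, hU2, one_mul]
  simp [hD, Matrix.diagonal_pow, Matrix.trace_diagonal, RCLike.ofReal_real_eq_id]

private lemma rayleigh_upper {n : ℕ} {X : Matrix (Fin n) (Fin n) ℝ} (hX : X.IsHermitian)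
    {L : ℝ} (hL : ∀ i, hX.eigenvalues i ≤ L) (x : Fin n → ℝ) :
    x ⬝ᵥ (X *ᵥ x) ≤ L * (x ⬝ᵥ x) := by
  obtain ⟨y, h1, h2⟩ := quad_decomp hX x
  rw [h1, h2, Finset.mul_sum]
  exact Finset.sum_le_sum fun i _ => mul_le_mul_of_nonneg_right (hL i) (sq_nonneg _)

private lemma rayleigh_lower {n : ℕ} {X : Matrix (Fin n) (Fin n) ℝ} (hX : X.IsHermitian)
    {l : ℝ} (hl : ∀ i, l ≤ hX.eigenvalues i) (x : Fin n → ℝ) :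
    l * (x ⬝ᵥ x) ≤ x ⬝ᵥ (X *ᵥ x) := by
  obtain ⟨y, h1, h2⟩ := quad_decomp hX x
  rw [h1, h2, Finset.mul_sum]
  exact Finset.sum_le_sum fun i _ => mul_le_mul_of_nonneg_right (hl i) (sq_nonneg _)

private lemma eig_mem_spectrum_complex {n : ℕ} {X : Matrix (Fin n) (Fin n) ℝ} {μ : ℝ}
    {u : Fin n → ℝ} (hu : u ≠ 0) (h : X *ᵥ u = μ • u) :
    (μ : ℂ) ∈ spectrum ℂ (X.map Complex.ofReal) := by
  classical
  rw [spectrum.mem_iff]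
  intro hunit
  rw [Matrix.isUnit_iff_isUnit_det, isUnit_iff_ne_zero] at hunit
  apply hunit
  rw [← Matrix.exists_mulVec_eq_zero_iff]
  refine ⟨fun k => (u k : ℂ), ?_, ?_⟩
  · intro hz
    apply hu
    funext k
    have := congrFun hz k
    simpa using this
  · funext k
    have hc : ((X.map Complex.ofReal) *ᵥ fun k => (u k : ℂ)) k = ((X *ᵥ u) k : ℂ) := by
      simp [Matrix.mulVec, dotProduct, Matrix.map_apply]
    rw [Algebra.algebraMap_eq_smul_one, Matrix.sub_mulVec, Matrix.smul_mulVec,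
      Matrix.one_mulVec]
    have := congrFun h k
    simp only [Pi.sub_apply, Pi.smul_apply, smul_eq_mul, Pi.zero_apply]
    rw [hc, this]
    simp [Pi.smul_apply]

private lemma pow_entry_le {n : ℕ} {X A : Matrix (Fin n) (Fin n) ℝ}
    (h0 : ∀ i j, 0 ≤ X i j) (hle : ∀ i j, X i j ≤ A i j) :
    ∀ (k : ℕ) (i j : Fin n), 0 ≤ (X ^ k) i j ∧ (X ^ k) i j ≤ (A ^ k) i j := by
  intro k
  induction k with
  | zero =>
    intro i j
    simp only [pow_zero, Matrix.one_apply]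
    by_cases h : i = j <;> simp [h]
  | succ k ih =>
    intro i j
    rw [pow_succ, pow_succ, Matrix.mul_apply, Matrix.mul_apply]
    constructor
    · exact Finset.sum_nonneg fun t _ => mul_nonneg (ih i t).1 (h0 t j)
    · refine Finset.sum_le_sum fun t _ => ?_
      exact mul_le_mul (ih i t).2 (hle t j) (h0 t j)
        (le_trans (ih i t).1 (ih i t).2)

attribute [local instance] Matrix.linftyOpNormedRing Matrix.linftyOpNormedAlgebra

private lemma le_specRad_of_eig {n : ℕ} (hn : 2 ≤ n) {A X : Matrix (Fin n) (Fin n) ℝ}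
    (h0 : ∀ i j, 0 ≤ X i j) (hle : ∀ i j, X i j ≤ A i j)
    {L : ℝ} (hL0 : 0 ≤ L) {u : Fin n → ℝ} (hu : u ≠ 0) (hXu : X *ᵥ u = L • u) :
    L ≤ specRad A := by
  classical
  haveI : Nonempty (Fin n) := ⟨⟨0, by omega⟩⟩
  haveI : CompleteSpace (Matrix (Fin n) (Fin n) ℂ) := FiniteDimensional.complete ℂ _
  set Ac := A.map (Complex.ofReal ·) with hAc
  set Xc := X.map (Complex.ofReal ·) with hXc
  -- powers map
  have hmap : ∀ (M : Matrix (Fin n) (Fin n) ℝ) (k : ℕ),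
      (M.map (Complex.ofReal ·)) ^ k = (M ^ k).map (Complex.ofReal ·) := by
    intro M k
    induction k with
    | zero => simp [Matrix.map_one]
    | succ k ih =>
      rw [pow_succ, pow_succ, ih]
      ext i j
      simp only [Matrix.map_apply, Matrix.mul_apply]
      push_cast
      rfl
  -- nnnorm comparison
  have hnorm : ∀ k : ℕ, ‖Xc ^ k‖₊ ≤ ‖Ac ^ k‖₊ := by
    intro k
    rw [hAc, hXc, hmap, hmap, Matrix.linfty_opNNNorm_def, Matrix.linfty_opNNNorm_def]
    refine Finset.sup_le fun i _ => le_trans ?_ (Finset.le_sup (Finset.mem_univ i))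
    refine Finset.sum_le_sum fun j _ => ?_
    have h1 := (pow_entry_le h0 hle k i j).1
    have h2 := (pow_entry_le h0 hle k i j).2
    rw [← NNReal.coe_le_coe]
    simp only [Matrix.map_apply, coe_nnnorm, Complex.norm_real, Real.norm_eq_abs]
    rw [abs_of_nonneg h1, abs_of_nonneg (le_trans h1 h2)]
    exact h2
  -- Gelfand comparison
  have hsr : spectralRadius ℂ Xc ≤ spectralRadius ℂ Ac := by
    refine le_of_tendsto_of_tendsto'
      (spectrum.pow_nnnorm_pow_one_div_tendsto_nhds_spectralRadius Xc)
      (spectrum.pow_nnnorm_pow_one_div_tendsto_nhds_spectralRadius Ac)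
      fun k => ?_
    exact ENNReal.rpow_le_rpow (by exact_mod_cast hnorm k) (by positivity)
  -- membership
  have hmem : (L : ℂ) ∈ spectrum ℂ Xc := eig_mem_spectrum_complex hu hXu
  have h1 : (‖(L : ℂ)‖₊ : ℝ≥0∞) ≤ spectralRadius ℂ Xc := by
    unfold spectralRadius
    exact le_iSup₂ (f := fun k (_ : k ∈ spectrum ℂ Xc) => (‖k‖₊ : ℝ≥0∞)) (L : ℂ) hmem
  -- upper bound by specRad
  have hbdd : BddAbove ((fun μ : ℂ => ‖μ‖) '' spectrum ℂ Ac) :=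
    ((spectrum.isCompact Ac).image continuous_norm).bddAbove
  have hub : ∀ μ ∈ spectrum ℂ Ac, ‖μ‖ ≤ specRad A := by
    intro μ hμ
    exact le_csSup hbdd ⟨μ, hμ, rfl⟩
  have hR0 : 0 ≤ specRad A := by
    obtain ⟨μ₀, hμ₀⟩ := spectrum.nonempty Ac
    exact le_trans (norm_nonneg μ₀) (hub μ₀ hμ₀)
  have h2 : spectralRadius ℂ Ac ≤ ENNReal.ofReal (specRad A) := by
    unfold spectralRadius
    refine iSup₂_le fun μ hμ => ?_
    rw [← enorm_eq_nnnorm, ← ofReal_norm]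
    exact ENNReal.ofReal_le_ofReal (by simpa using hub μ hμ)
  have h3 : (‖(L : ℂ)‖₊ : ℝ≥0∞) ≤ ENNReal.ofReal (specRad A) :=
    le_trans h1 (le_trans hsr h2)
  rw [← enorm_eq_nnnorm, ← ofReal_norm] at h3
  rw [ENNReal.ofReal_le_ofReal_iff hR0] at h3
  calc L ≤ ‖(L : ℂ)‖ := by simp [Complex.norm_real, Real.norm_eq_abs, le_abs_self]
  _ ≤ specRad A := h3

private lemma claimA_core {n : ℕ} {X : Matrix (Fin n) (Fin n) ℝ}
    (hnn : ∀ i j, 0 ≤ X i j) {L l : ℝ} {v u : Fin n → ℝ}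
    (hv : X *ᵥ v = L • v) (hu : X *ᵥ u = l • u)
    (hvpos : ∀ k, 0 < v k) (hune : u ≠ 0) (horth : ∑ k, u k * v k = 0) :
    ∃ k m : Fin n, k ≠ m ∧ X k k + X m m ≤ L + l := by
  classical
  have hne : (Finset.univ : Finset (Fin n)).Nonempty := by
    rcases Function.ne_iff.mp hune with ⟨k, -⟩
    exact ⟨k, Finset.mem_univ k⟩
  set w : Fin n → ℝ := fun k => u k / v k with hw
  have huw : ∀ k, u k = w k * v k := fun k => by
    rw [hw]; exact (div_mul_cancel₀ (u k) (hvpos k).ne').symm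
  obtain ⟨kM, -, hkM⟩ := Finset.exists_max_image Finset.univ w hne
  obtain ⟨km, -, hkm⟩ := Finset.exists_min_image Finset.univ w hne
  have hkMpos : 0 < w kM := by
    by_contra hcon
    push_neg at hcon
    have hterm : ∀ k ∈ Finset.univ, u k * v k ≤ 0 := by
      intro k _
      have hwk : w k ≤ 0 := le_trans (hkM k (Finset.mem_univ k)) hcon
      rw [huw k]
      have h1 : w k * v k ≤ 0 := mul_nonpos_iff.mpr (Or.inr ⟨hwk, (hvpos k).le⟩)
      exact mul_nonpos_iff.mpr (Or.inr ⟨h1, (hvpos k).le⟩)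
    have hzero := (Finset.sum_eq_zero_iff_of_nonpos hterm).mp horth
    apply hune
    funext k
    exact (mul_eq_zero.mp (hzero k (Finset.mem_univ k))).resolve_right (hvpos k).ne'
  have hkmneg : w km ≤ 0 := by
    by_contra hcon
    push_neg at hcon
    have hpos : 0 < ∑ k, u k * v k := by
      refine Finset.sum_pos (fun k _ => ?_) hne
      rw [huw k]
      exact mul_pos (mul_pos (lt_of_lt_of_le hcon (hkm k (Finset.mem_univ k))) (hvpos k))
        (hvpos k)
    rw [horth] at hpos
    exact lt_irrefl 0 hpos
  have hkMkm : kM ≠ km := fun h => absurd (h ▸ hkMpos) (not_lt.mpr hkmneg)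
  set dM := X kM kM with hdM
  set dm := X km km with hdm
  -- row identities
  have hrow : ∀ (z : Fin n → ℝ) (c : ℝ) (k : Fin n), X *ᵥ z = c • z →
      X k k * z k + ∑ t ∈ Finset.univ.erase k, X k t * z t = c * z k := by
    intro z c k hz
    have := congrFun hz k
    simp only [Matrix.mulVec, dotProduct, Pi.smul_apply, smul_eq_mul] at this
    rw [← this]
    exact Finset.add_sum_erase _ (fun t => X k t * z t) (Finset.mem_univ k)
  -- inequality at kM
  have hi : w km * (L - dM) ≤ (l - dM) * w kM := by
    have h1 := hrow u l kM hu
    have h2 := hrow v L kM hv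
    have hcomp : w km * ∑ t ∈ Finset.univ.erase kM, X kM t * v t
        ≤ ∑ t ∈ Finset.univ.erase kM, X kM t * u t := by
      rw [Finset.mul_sum]
      refine Finset.sum_le_sum fun t _ => ?_
      have hvt : w km * v t ≤ u t := by
        rw [huw t]
        exact mul_le_mul_of_nonneg_right (hkm t (Finset.mem_univ t)) (hvpos t).le
      calc w km * (X kM t * v t) = X kM t * (w km * v t) := by ring
        _ ≤ X kM t * u t := mul_le_mul_of_nonneg_left hvt (hnn kM t)
    have h3 : w km * (L * v kM - dM * v kM) ≤ l * u kM - dM * u kM := by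
      have e1 : l * u kM - dM * u kM = ∑ t ∈ Finset.univ.erase kM, X kM t * u t := by
        linarith [h1]
      have e2 : L * v kM - dM * v kM = ∑ t ∈ Finset.univ.erase kM, X kM t * v t := by
        linarith [h2]
      rw [e1, e2]
      exact hcomp
    rw [huw kM] at h3
    have hvM := hvpos kM
    have goal' : (w km * (L - dM)) * v kM ≤ ((l - dM) * w kM) * v kM := by nlinarith [h3]
    exact le_of_mul_le_mul_right goal' hvM
  -- inequality at km
  have hii : (l - dm) * w km ≤ w kM * (L - dm) := by
    have h1 := hrow u l km hu
    have h2 := hrow v L km hv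
    have hcomp : ∑ t ∈ Finset.univ.erase km, X km t * u t
        ≤ w kM * ∑ t ∈ Finset.univ.erase km, X km t * v t := by
      rw [Finset.mul_sum]
      refine Finset.sum_le_sum fun t _ => ?_
      have hvt : u t ≤ w kM * v t := by
        rw [huw t]
        exact mul_le_mul_of_nonneg_right (hkM t (Finset.mem_univ t)) (hvpos t).le
      calc X km t * u t ≤ X km t * (w kM * v t) := mul_le_mul_of_nonneg_left hvt (hnn km t)
        _ = w kM * (X km t * v t) := by ring
    have h3 : l * u km - dm * u km ≤ w kM * (L * v km - dm * v km) := by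
      have e1 : l * u km - dm * u km = ∑ t ∈ Finset.univ.erase km, X km t * u t := by
        linarith [h1]
      have e2 : L * v km - dm * v km = ∑ t ∈ Finset.univ.erase km, X km t * v t := by
        linarith [h2]
      rw [e1, e2]
      exact hcomp
    rw [huw km] at h3
    have hvm := hvpos km
    have goal' : ((l - dm) * w km) * v km ≤ (w kM * (L - dm)) * v km := by nlinarith [h3]
    exact le_of_mul_le_mul_right goal' hvm
  refine ⟨kM, km, hkMkm, ?_⟩
  nlinarith [hi, hii, sub_pos.mpr (lt_of_le_of_lt hkmneg hkMpos)]

private lemma single_quad {n : ℕ} (Y : Matrix (Fin n) (Fin n) ℝ) (k : Fin n) :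
    (Pi.single k 1 : Fin n → ℝ) ⬝ᵥ (Y *ᵥ (Pi.single k 1 : Fin n → ℝ)) = Y k k ∧
    (Pi.single k 1 : Fin n → ℝ) ⬝ᵥ (Pi.single k 1 : Fin n → ℝ) = 1 := by
  classical
  constructor
  · simp [dotProduct, Matrix.mulVec, Pi.single_apply, Finset.sum_ite_eq',
      mul_ite, ite_mul]
  · simp [dotProduct, Pi.single_apply, Finset.sum_ite_eq']

private lemma basis_vec_ne_zero {n : ℕ} {Y : Matrix (Fin n) (Fin n) ℝ}
    (hY : Y.IsHermitian) (i : Fin n) : (⇑(hY.eigenvectorBasis i) : Fin n → ℝ) ≠ 0 := by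
  intro h
  have hb : hY.eigenvectorBasis i = 0 := by
    apply (WithLp.equiv 2 (Fin n → ℝ)).injective
    simpa using h
  have h1 : ‖hY.eigenvectorBasis i‖ = 1 := hY.eigenvectorBasis.orthonormal.1 i
  rw [hb, norm_zero] at h1
  norm_num at h1

private lemma dot_self_pos {n : ℕ} {x : Fin n → ℝ} (hx : x ≠ 0) : 0 < x ⬝ᵥ x := by
  rcases Function.ne_iff.mp hx with ⟨k, hk⟩
  have : (0:ℝ) < x k * x k := mul_self_pos.mpr hk
  calc (0:ℝ) < x k * x k := this
    _ ≤ x ⬝ᵥ x := Finset.single_le_sum (f := fun t => x t * x t)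
        (fun t _ => mul_self_nonneg (x t)) (Finset.mem_univ k)

private lemma claimA {n : ℕ} (hn : 2 ≤ n) {X : Matrix (Fin n) (Fin n) ℝ}
    (hsym : X.IsHermitian) (hnn : ∀ i j, 0 ≤ X i j)
    {L l : ℝ} (hLub : ∀ i, hsym.eigenvalues i ≤ L)
    (hlub : ∀ i, l ≤ hsym.eigenvalues i) (hlmem : ∃ i, hsym.eigenvalues i = l)
    {c : ℝ} (hc : ∀ k m : Fin n, k ≠ m → c ≤ X k k + X m m) :
    c ≤ L + l := by
  classical
  have hnpos : (0:ℝ) < n := by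
    have : 0 < n := by omega
    exact_mod_cast this
  haveI : Nonempty (Fin n) := ⟨⟨0, by omega⟩⟩
  refine le_of_forall_pos_le_add fun ε hε => ?_
  set δ : ℝ := ε / (2 * n) with hδdef
  have hδpos : 0 < δ := by positivity
  set Y : Matrix (Fin n) (Fin n) ℝ := X + Matrix.of (fun _ _ => δ) with hYdef
  have hYapp : ∀ i j, Y i j = X i j + δ := fun i j => by
    rw [hYdef]; simp [Matrix.add_apply]
  have hYsym : Y.IsHermitian := by
    refine hsym.add ?_
    show (Matrix.of (fun _ _ => δ) : Matrix (Fin n) (Fin n) ℝ).IsHermitian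
    ext i j
    simp [Matrix.conjTranspose_apply]
  have hYnn : ∀ i j, 0 ≤ Y i j := fun i j => by
    rw [hYapp]; exact add_nonneg (hnn i j) hδpos.le
  -- quadratic form of Y versus X
  have hquadY : ∀ x : Fin n → ℝ, x ⬝ᵥ (Y *ᵥ x) = x ⬝ᵥ (X *ᵥ x) + δ * (∑ k, x k) ^ 2 := by
    intro x
    rw [hYdef, Matrix.add_mulVec, dotProduct_add]
    congr 1
    simp only [Matrix.mulVec, dotProduct, Matrix.of_apply]
    simp only [← Finset.mul_sum]
    rw [← Finset.sum_mul]
    ring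
  have hCS : ∀ x : Fin n → ℝ, (∑ k, x k) ^ 2 ≤ n * (x ⬝ᵥ x) := by
    intro x
    have h1 := sq_sum_le_card_mul_sum_sq (s := (Finset.univ : Finset (Fin n))) (f := x)
    simp only [Finset.card_univ, Fintype.card_fin] at h1
    have h2 : x ⬝ᵥ x = ∑ k, x k ^ 2 := by
      simp [dotProduct, pow_two]
    rw [h2]
    exact h1
  -- eigen data of Y
  obtain ⟨iM, -, hiM⟩ := Finset.exists_max_image Finset.univ hYsym.eigenvalues
    ⟨⟨0, by omega⟩, Finset.mem_univ _⟩
  obtain ⟨im, -, him⟩ := Finset.exists_min_image Finset.univ hYsym.eigenvalues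
    ⟨⟨0, by omega⟩, Finset.mem_univ _⟩
  set L' := hYsym.eigenvalues iM with hL'def
  set l' := hYsym.eigenvalues im with hl'def
  have hL'ub : ∀ i, hYsym.eigenvalues i ≤ L' := fun i => hiM i (Finset.mem_univ i)
  have hl'lb : ∀ i, l' ≤ hYsym.eigenvalues i := fun i => him i (Finset.mem_univ i)
  -- bound L' ≤ L + δ n
  have hL'le : L' ≤ L + δ * n := by
    set z : Fin n → ℝ := ⇑(hYsym.eigenvectorBasis iM) with hz
    have hzeig : Y *ᵥ z = L' • z := hYsym.mulVec_eigenvectorBasis iM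
    have hzne : z ≠ 0 := basis_vec_ne_zero hYsym iM
    have hzz : 0 < z ⬝ᵥ z := dot_self_pos hzne
    have h1 : L' * (z ⬝ᵥ z) = z ⬝ᵥ (Y *ᵥ z) := by
      rw [hzeig, dotProduct_smul]
      simp [smul_eq_mul]
    have h2 : z ⬝ᵥ (Y *ᵥ z) ≤ L * (z ⬝ᵥ z) + δ * (n * (z ⬝ᵥ z)) := by
      rw [hquadY z]
      have := rayleigh_upper hsym hLub z
      have := mul_le_mul_of_nonneg_left (hCS z) hδpos.le
      linarith
    nlinarith [h1, h2, hzz]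
  -- bound l' ≤ l + δ n
  have hl'le : l' ≤ l + δ * n := by
    obtain ⟨i0, hi0⟩ := hlmem
    set z : Fin n → ℝ := ⇑(hsym.eigenvectorBasis i0) with hz
    have hzne : z ≠ 0 := basis_vec_ne_zero hsym i0
    have hzz : 0 < z ⬝ᵥ z := dot_self_pos hzne
    have h1 : l' * (z ⬝ᵥ z) ≤ z ⬝ᵥ (Y *ᵥ z) := rayleigh_lower hYsym hl'lb z
    have hzeig : X *ᵥ z = l • z := by
      have := hsym.mulVec_eigenvectorBasis i0
      rw [hi0] at this
      exact this
    have h2 : z ⬝ᵥ (X *ᵥ z) = l * (z ⬝ᵥ z) := by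
      rw [hzeig, dotProduct_smul]
      simp [smul_eq_mul]
    have h3 : z ⬝ᵥ (Y *ᵥ z) ≤ l * (z ⬝ᵥ z) + δ * (n * (z ⬝ᵥ z)) := by
      rw [hquadY z, h2]
      have := mul_le_mul_of_nonneg_left (hCS z) hδpos.le
      linarith
    nlinarith [h1, h3, hzz]
  -- a pair k ≠ m with Y k k + Y m m ≤ L' + l'
  have hpair : ∃ k m : Fin n, k ≠ m ∧ Y k k + Y m m ≤ L' + l' := by
    by_cases hdeg : L' = l'
    · refine ⟨⟨0, by omega⟩, ⟨1, by omega⟩, by simp [Fin.ext_iff], ?_⟩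
      have hd : ∀ k : Fin n, Y k k ≤ L' := by
        intro k
        have hq := single_quad Y k
        have := rayleigh_upper hYsym hL'ub (Pi.single k 1 : Fin n → ℝ)
        rw [hq.1, hq.2, mul_one] at this
        exact this
      have := hd ⟨0, by omega⟩
      have := hd ⟨1, by omega⟩
      rw [← hdeg]
      linarith
    · -- nondegenerate case : build positive eigenvector
      set z : Fin n → ℝ := ⇑(hYsym.eigenvectorBasis iM) with hz
      have hzeig : Y *ᵥ z = L' • z := hYsym.mulVec_eigenvectorBasis iM
      have hzne : z ≠ 0 := basis_vec_ne_zero hYsym iM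
      set v : Fin n → ℝ := fun k => |z k| with hv
      have hvnn : ∀ k, 0 ≤ v k := fun k => abs_nonneg _
      have hvne : v ≠ 0 := by
        rcases Function.ne_iff.mp hzne with ⟨k, hk⟩
        exact Function.ne_iff.mpr ⟨k, by simpa [hv, abs_ne_zero] using hk⟩
      have hvv : v ⬝ᵥ v = z ⬝ᵥ z := by
        simp only [dotProduct, hv, abs_mul_abs_self]
      have hvq : z ⬝ᵥ (Y *ᵥ z) ≤ v ⬝ᵥ (Y *ᵥ v) := by
        simp only [dotProduct, Matrix.mulVec, Finset.mul_sum]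
        refine Finset.sum_le_sum fun i _ => Finset.sum_le_sum fun j _ => ?_
        have h1 : z i * (Y i j * z j) ≤ |z i * (Y i j * z j)| := le_abs_self _
        have h2 : |z i * (Y i j * z j)| = v i * (Y i j * v j) := by
          rw [abs_mul, abs_mul, abs_of_nonneg (hYnn i j)]
        exact h1.trans_eq h2
      -- positive semidefiniteness of L'•1 - Y
      have hP : Matrix.PosSemidef ((L' • (1 : Matrix (Fin n) (Fin n) ℝ)) - Y) := by
        rw [Matrix.posSemidef_iff_dotProduct_mulVec]
        constructor
        · simp only [Matrix.IsHermitian, Matrix.conjTranspose_sub, Matrix.conjTranspose_smul,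
            Matrix.conjTranspose_one, star_trivial, hYsym.eq]
        · intro x
          have h1 : x ⬝ᵥ (((L' • (1 : Matrix (Fin n) (Fin n) ℝ)) - Y) *ᵥ x)
              = L' * (x ⬝ᵥ x) - x ⬝ᵥ (Y *ᵥ x) := by
            rw [Matrix.sub_mulVec, dotProduct_sub, Matrix.smul_mulVec,
              Matrix.one_mulVec, dotProduct_smul]
            simp [smul_eq_mul]
          have h2 := rayleigh_upper hYsym hL'ub x
          simp only [star_trivial]
          rw [h1]
          linarith
      have hPq : v ⬝ᵥ (((L' • (1 : Matrix (Fin n) (Fin n) ℝ)) - Y) *ᵥ v) = 0 := by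
        have h1 : v ⬝ᵥ (((L' • (1 : Matrix (Fin n) (Fin n) ℝ)) - Y) *ᵥ v)
            = L' * (v ⬝ᵥ v) - v ⬝ᵥ (Y *ᵥ v) := by
          rw [Matrix.sub_mulVec, dotProduct_sub, Matrix.smul_mulVec,
            Matrix.one_mulVec, dotProduct_smul]
          simp [smul_eq_mul]
        have h2 : z ⬝ᵥ (Y *ᵥ z) = L' * (z ⬝ᵥ z) := by
          rw [hzeig, dotProduct_smul]; simp [smul_eq_mul]
        have h3 := Matrix.PosSemidef.dotProduct_mulVec_nonneg hP v
        simp only [star_trivial] at h3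
        rw [h1] at h3 ⊢
        have h4 : L' * (v ⬝ᵥ v) = L' * (z ⬝ᵥ z) := by rw [hvv]
        linarith [hvq, h2, h4, h3]
      have hPv : ((L' • (1 : Matrix (Fin n) (Fin n) ℝ)) - Y) *ᵥ v = 0 := by
        have := (hP.dotProduct_mulVec_zero_iff v).mp ?_
        · exact this
        · simpa [star_trivial] using hPq
      have hveig : Y *ᵥ v = L' • v := by
        have h1 : (L' • (1 : Matrix (Fin n) (Fin n) ℝ)) *ᵥ v - Y *ᵥ v = 0 := by
          rw [← Matrix.sub_mulVec]; exact hPv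
        have h2 : (L' • (1 : Matrix (Fin n) (Fin n) ℝ)) *ᵥ v = L' • v := by
          rw [Matrix.smul_mulVec, Matrix.one_mulVec]
        rw [h2] at h1
        funext k
        have := congrFun h1 k
        simp only [Pi.sub_apply, Pi.zero_apply, sub_eq_zero] at this
        exact this.symm
      have hsumv : 0 < ∑ k, v k := by
        rcases Function.ne_iff.mp hvne with ⟨k, hk⟩
        refine Finset.sum_pos' (fun t _ => hvnn t) ⟨k, Finset.mem_univ k, ?_⟩
        exact lt_of_le_of_ne (hvnn k) (Ne.symm hk)
      have hL'pos : 0 < L' := by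
        have hvv' : 0 < v ⬝ᵥ v := dot_self_pos hvne
        have h1 : L' * (v ⬝ᵥ v) = v ⬝ᵥ (Y *ᵥ v) := by
          rw [hveig, dotProduct_smul]; simp [smul_eq_mul]
        have h2 : 0 ≤ v ⬝ᵥ (X *ᵥ v) := by
          simp only [dotProduct, Matrix.mulVec]
          refine Finset.sum_nonneg fun i _ => mul_nonneg (hvnn i) ?_
          exact Finset.sum_nonneg fun j _ => mul_nonneg (hnn i j) (hvnn j)
        have h3 := hquadY v
        nlinarith [mul_pos hδpos (pow_pos hsumv 2)]
      have hvpos : ∀ k, 0 < v k := by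
        intro k
        have h1 : (Y *ᵥ v) k = L' * v k := by rw [hveig]; simp [smul_eq_mul]
        have h2 : δ * ∑ t, v t ≤ (Y *ᵥ v) k := by
          simp only [Matrix.mulVec, dotProduct, Finset.mul_sum]
          refine Finset.sum_le_sum fun t _ => ?_
          have : δ ≤ Y k t := by rw [hYapp]; linarith [hnn k t]
          exact mul_le_mul_of_nonneg_right this (hvnn t)
        have h3 : 0 < L' * v k := lt_of_lt_of_le (mul_pos hδpos hsumv) (h2.trans_eq h1)
        by_contra hcon
        push_neg at hcon
        nlinarith [h3, hL'pos]
      -- second eigenvector and orthogonality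
      set u : Fin n → ℝ := ⇑(hYsym.eigenvectorBasis im) with hu
      have hueig : Y *ᵥ u = l' • u := hYsym.mulVec_eigenvectorBasis im
      have hune : u ≠ 0 := basis_vec_ne_zero hYsym im
      have horth : ∑ k, u k * v k = 0 := by
        have hd1 : u ⬝ᵥ (Y *ᵥ v) = L' * (u ⬝ᵥ v) := by
          rw [hveig, dotProduct_smul]; simp [smul_eq_mul]
        have hd2 : u ⬝ᵥ (Y *ᵥ v) = l' * (u ⬝ᵥ v) := by
          rw [dot_mulVec_flip]
          have hstar : star Y = Y := hYsym.eq
          rw [hstar, hueig, smul_dotProduct]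
          simp [smul_eq_mul]
        have : (L' - l') * (u ⬝ᵥ v) = 0 := by linarith [hd1, hd2]
        have h0 : u ⬝ᵥ v = 0 := by
          rcases mul_eq_zero.mp this with h | h
          · exact absurd (by linarith [sub_eq_zero.mp h] : L' = l') hdeg
          · exact h
        simpa [dotProduct] using h0
      exact claimA_core hYnn hveig hueig hvpos hune horth
  obtain ⟨k, m, hkm, hle⟩ := hpair
  have hδn : δ * n = ε / 2 := by
    rw [hδdef]; field_simp
  have hc' := hc k m hkm
  have e1 : Y k k = X k k + δ := hYapp k k
  have e2 : Y m m = X m m + δ := hYapp m m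
  linarith [hL'le, hl'le, hδpos]
/-- For nonnegative `A`, `X = (min{a_{ij}, a_{ji}})`, and two smallest
diagonal entries `b₁₁, b₂₂`,
`ρ(A) ≥ (b₁₁+b₂₂)/2 + (tr(X²)/n − (tr X/n)²)^{1/2}`. -/

theorem stmt11 {n : ℕ} (hn : 2 ≤ n) (A : Matrix (Fin n) (Fin n) ℝ)
    (hnn : ∀ i j, 0 ≤ A i j)
    (X : Matrix (Fin n) (Fin n) ℝ) (hX : ∀ i j, X i j = min (A i j) (A j i))
    (σ : Equiv.Perm (Fin n)) (hσ : Monotone (A.diag ∘ σ)) :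
    (A.diag (σ ⟨0, by omega⟩) + A.diag (σ ⟨1, by omega⟩)) / 2
      + Real.sqrt ((X ^ 2).trace / n - (X.trace / n) ^ 2) ≤ specRad A := by
  classical
  have hnR : (0:ℝ) < n := by exact_mod_cast (by omega : 0 < n)
  have hp0 : 0 < n := by omega
  have hp1 : 1 < n := by omega
  have hX0 : ∀ i j, 0 ≤ X i j := fun i j => by rw [hX]; exact le_min (hnn i j) (hnn j i)
  have hXle : ∀ i j, X i j ≤ A i j := fun i j => by rw [hX]; exact min_le_left _ _
  have hXsym : X.IsHermitian := by
    ext i j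
    simp only [Matrix.conjTranspose_apply, star_trivial]
    rw [hX, hX, min_comm]
  have hXdiag : ∀ k, X k k = A.diag k := fun k => by
    rw [hX]; simp [Matrix.diag]
  obtain ⟨iM, -, hiM⟩ := Finset.exists_max_image Finset.univ hXsym.eigenvalues
    ⟨⟨0, hp0⟩, Finset.mem_univ _⟩
  obtain ⟨im, -, him⟩ := Finset.exists_min_image Finset.univ hXsym.eigenvalues
    ⟨⟨0, hp0⟩, Finset.mem_univ _⟩
  set ev := hXsym.eigenvalues with hev
  set L := ev iM with hL
  set l := ev im with hl
  have hLub : ∀ i, ev i ≤ L := fun i => hiM i (Finset.mem_univ i)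
  have hllb : ∀ i, l ≤ ev i := fun i => him i (Finset.mem_univ i)
  have htr1 : X.trace = ∑ i, ev i := by
    have := trace_pow hXsym 1
    simpa [pow_one] using this
  have htr2 : (X ^ 2).trace = ∑ i, ev i ^ 2 := trace_pow hXsym 2
  -- two smallest diagonal entries
  have hdiag_min : ∀ t : Fin n, A.diag (σ ⟨0, hp0⟩) ≤ A.diag (σ t) := by
    intro t
    have h1 : (⟨0, hp0⟩ : Fin n) ≤ t := Fin.le_def.mpr (by simp)
    simpa using hσ h1
  have hdiag_snd : ∀ t : Fin n, t ≠ ⟨0, hp0⟩ → A.diag (σ ⟨1, hp1⟩) ≤ A.diag (σ t) := by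
    intro t ht
    have ht' : t.val ≠ 0 := fun h0 => ht (Fin.ext h0)
    have h1 : (⟨1, hp1⟩ : Fin n) ≤ t := Fin.le_def.mpr (by simp; omega)
    simpa using hσ h1
  have hpairS : ∀ k m : Fin n, k ≠ m →
      A.diag (σ ⟨0, hp0⟩) + A.diag (σ ⟨1, hp1⟩) ≤ X k k + X m m := by
    intro k m hkm
    rw [hXdiag, hXdiag]
    have hk : A.diag k = A.diag (σ (σ.symm k)) := by rw [σ.apply_symm_apply]
    have hm : A.diag m = A.diag (σ (σ.symm m)) := by rw [σ.apply_symm_apply]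
    rw [hk, hm]
    by_cases hb0 : σ.symm m = ⟨0, hp0⟩
    · have ha0 : σ.symm k ≠ ⟨0, hp0⟩ := by
        rw [← hb0]
        intro h
        exact hkm (σ.symm.injective h)
      have h1 : A.diag (σ ⟨0, hp0⟩) ≤ A.diag (σ (σ.symm m)) := hdiag_min _
      have h2 : A.diag (σ ⟨1, hp1⟩) ≤ A.diag (σ (σ.symm k)) := hdiag_snd _ ha0
      linarith
    · have h1 : A.diag (σ ⟨0, hp0⟩) ≤ A.diag (σ (σ.symm k)) := hdiag_min _
      have h2 : A.diag (σ ⟨1, hp1⟩) ≤ A.diag (σ (σ.symm m)) := hdiag_snd _ hb0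
      linarith
  -- Claim A
  have hSLl : A.diag (σ ⟨0, hp0⟩) + A.diag (σ ⟨1, hp1⟩) ≤ L + l :=
    claimA hn hXsym hX0 hLub hllb ⟨im, rfl⟩ hpairS
  -- variance bound
  set c : ℝ := (A.diag (σ ⟨0, hp0⟩) + A.diag (σ ⟨1, hp1⟩)) / 2 with hc
  have hlL : l ≤ L := le_trans (hllb iM) (le_refl L)
  have hLc0 : 0 ≤ L - c := by
    have := hllb iM
    simp only [hc]
    linarith [hSLl, hlL]
  have hsqrt : Real.sqrt ((X ^ 2).trace / n - (X.trace / n) ^ 2) ≤ L - c := by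
    have hterm : ∀ i, (ev i - c) ^ 2 ≤ (L - c) ^ 2 := by
      intro i
      have h1 : ev i ≤ L := hLub i
      have h2 : 2 * c - L ≤ ev i := by
        have := hllb i
        simp only [hc] at *
        linarith [hSLl]
      exact sq_le_sq' (by linarith) (by linarith)
    have hsum : ∑ i, (ev i - c) ^ 2 ≤ n * (L - c) ^ 2 := by
      calc ∑ i, (ev i - c) ^ 2 ≤ ∑ _i : Fin n, (L - c) ^ 2 :=
            Finset.sum_le_sum fun i _ => hterm i
        _ = n * (L - c) ^ 2 := by
            rw [Finset.sum_const, Finset.card_univ, Fintype.card_fin, nsmul_eq_mul]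
    set T1 : ℝ := ∑ i, ev i with hT1
    set T2 : ℝ := ∑ i, ev i ^ 2 with hT2
    have hexp : ∑ i, (ev i - c) ^ 2 = T2 - 2 * c * T1 + n * c ^ 2 := by
      rw [hT1, hT2]
      rw [Finset.mul_sum, ← Finset.sum_sub_distrib]
      rw [show (n : ℝ) * c ^ 2 = ∑ _i : Fin n, c ^ 2 by
        rw [Finset.sum_const, Finset.card_univ, Fintype.card_fin, nsmul_eq_mul]]
      rw [← Finset.sum_add_distrib]
      exact Finset.sum_congr rfl fun i _ => by ring
    have hvar : (X ^ 2).trace / n - (X.trace / n) ^ 2 ≤ (L - c) ^ 2 := by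
      rw [htr1, htr2]
      have h5 : T2 - 2 * c * T1 + n * c ^ 2 ≤ n * (L - c) ^ 2 := by
        rw [← hexp]; exact hsum
      have h6 : 0 ≤ (T1 - n * c) ^ 2 / n := by positivity
      have h7 : T1 ^ 2 / n - 2 * c * T1 + n * c ^ 2 = (T1 - n * c) ^ 2 / n := by
        field_simp
        ring
      have h8 : T2 - T1 ^ 2 / n ≤ n * (L - c) ^ 2 := by linarith [h5, h6, h7]
      have h9 : T2 / n - (T1 / n) ^ 2 = (T2 - T1 ^ 2 / n) / n := by
        field_simp
      rw [h9, div_le_iff₀ hnR]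
      nlinarith [h8]
    calc Real.sqrt ((X ^ 2).trace / n - (X.trace / n) ^ 2)
        ≤ Real.sqrt ((L - c) ^ 2) := Real.sqrt_le_sqrt hvar
      _ = L - c := Real.sqrt_sq hLc0
  -- spectral radius bound
  have hL0 : 0 ≤ L := by
    have hq := single_quad X ⟨0, hp0⟩
    have hr := rayleigh_upper hXsym hLub (Pi.single (⟨0, hp0⟩ : Fin n) 1)
    rw [hq.1, hq.2, mul_one] at hr
    exact le_trans (hX0 _ _) hr
  have hfin : L ≤ specRad A := by
    refine le_specRad_of_eig hn hX0 hXle hL0 (basis_vec_ne_zero hXsym iM) ?_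
    exact hXsym.mulVec_eigenvectorBasis iM
  calc (A.diag (σ ⟨0, by omega⟩) + A.diag (σ ⟨1, by omega⟩)) / 2
      + Real.sqrt ((X ^ 2).trace / n - (X.trace / n) ^ 2)
      ≤ c + (L - c) := by
        have : (A.diag (σ ⟨0, (by omega : 0 < n)⟩) + A.diag (σ ⟨1, (by omega : 1 < n)⟩)) / 2 = c := hc.symm
        linarith [hsqrt]
    _ = L := by ring
    _ ≤ specRad A := hfin
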